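/- Let n ≥ 1 be a natural number, let z be a complex number with Re(z) > 0, and let u, v, w be complex numbers with u ∈ 𝔻, w ∈ 𝔻, and v^n ∈ 𝔻'. Then F(z/n; u, v^n, w) = ∑_{α^n=1} F(z; u, vα, w), where the sum runs over all n-th roots of unity α. -/

import Mathlib

/-!
Substituting `t = s ^ n` turns `F(z/n; u, v^n, w)` into the integral over `(0, 1)` of
`log (1 - u s^z) log (1 - w s^z) · n s^(n-1) / (v^(-n) - s^n)`, and the partial fraction
expansion `n s^(n-1) / (v^(-n) - s^n) = ∑_{α^n = 1} 1 / ((v α)⁻¹ - s)` splits this into the `n`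
integrals on the right. Exchanging sum and integral needs each of them to converge: the logarithms
grow at most like `(1 - s)^(-1/4)` as `s → 1`, and the denominators stay away from `0` because
`0 < |v α| ≤ 1` and `v α ≠ 1`.
-/

open Complex MeasureTheory Polynomial

/-- `t^z := exp(z · log t)` with `log t` the real logarithm. -/
noncomputable def tpow (z : ℂ) (t : ℝ) : ℂ := Complex.exp (z * Real.log t)

/-- `F(z;u,v,w) = ∫₀¹ log(1 − u t^z) log(1 − w t^z)/(v⁻¹ − t) dt`. -/
noncomputable def F3 (z u v w : ℂ) : ℂ :=
  ∫ t in (0:ℝ)..1,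
    Complex.log (1 - u * tpow z t) * Complex.log (1 - w * tpow z t) / (v⁻¹ - (t : ℂ))

open Set

namespace IsPrimitiveRoot

section CommRing

variable {R : Type*} [CommRing R] [IsDomain R] {ζ : R} {n : ℕ}

theorem sum_nthRootsFinset_one_eq_sum_range {M : Type*} [AddCommMonoid M]
    (hζ : IsPrimitiveRoot ζ n) (f : R → M) :
    ∑ α ∈ nthRootsFinset n (1 : R), f α = ∑ i ∈ Finset.range n, f (ζ ^ i) := by
  classical
  rw [nthRootsFinset_def, ← Multiset.toFinset_eq hζ.nthRoots_one_nodup, Finset.sum_mk,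
    hζ.nthRoots_eq (one_pow n)]
  simp [Finset.sum_eq_multiset_sum]

theorem sum_nthRootsFinset_one_pow (hζ : IsPrimitiveRoot ζ n) (m : ℕ) :
    ∑ α ∈ nthRootsFinset n (1 : R), α ^ m = if n ∣ m then (n : R) else 0 := by
  rw [hζ.sum_nthRootsFinset_one_eq_sum_range]
  simp_rw [← pow_mul, mul_comm _ m, pow_mul]
  split_ifs with hm
  · simp [(hζ.pow_eq_one_iff_dvd m).2 hm]
  · have hζm : ζ ^ m - 1 ≠ 0 := sub_ne_zero.2 (mt (hζ.pow_eq_one_iff_dvd m).1 hm)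
    refine mul_left_injective₀ hζm ?_
    dsimp only
    rw [geom_sum_mul, ← pow_mul, mul_comm, pow_mul, hζ.pow_eq_one, one_pow, sub_self, zero_mul]

end CommRing

variable {K : Type*} [Field K] {ζ : K} {n : ℕ}

theorem sum_nthRootsFinset_div_one_sub_mul (hζ : IsPrimitiveRoot ζ n) {x : K}
    (hx : x ^ n ≠ 1) :
    ∑ α ∈ nthRootsFinset n (1 : K), α / (1 - x * α) = n * x ^ (n - 1) / (1 - x ^ n) := by
  have hn : 0 < n := Nat.pos_of_ne_zero <| by rintro rfl; exact hx (pow_zero x)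
  have expand : ∀ α ∈ nthRootsFinset n (1 : K),
      α / (1 - x * α) * (1 - x ^ n) = ∑ k ∈ Finset.range n, x ^ k * α ^ (k + 1) := by
    intro α hα
    have hαn : α ^ n = 1 := (Polynomial.mem_nthRootsFinset hn 1).1 hα
    have hgeom : 1 - x ^ n = (1 - x * α) * ∑ k ∈ Finset.range n, (x * α) ^ k := by
      rw [mul_neg_geom_sum, mul_pow, hαn, mul_one]
    have hxα : 1 - x * α ≠ 0 := by
      intro h
      rw [h, zero_mul, sub_eq_zero] at hgeom
      exact hx hgeom.symm
    rw [hgeom, ← mul_assoc, div_mul_cancel₀ α hxα, Finset.mul_sum]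
    exact Finset.sum_congr rfl fun k _ ↦ by ring
  -- summing over `α` kills every term but `k = n - 1`
  rw [eq_div_iff (sub_ne_zero.2 (Ne.symm hx)), Finset.sum_mul, Finset.sum_congr rfl expand,
    Finset.sum_comm]
  simp_rw [← Finset.mul_sum, hζ.sum_nthRootsFinset_one_pow]
  rw [Finset.sum_eq_single (n - 1)]
  · rw [Nat.sub_add_cancel hn, if_pos dvd_rfl, mul_comm]
  · intro k hk hkn
    have hndvd : ¬ n ∣ k + 1 := fun h ↦
      hkn (by have := Nat.le_of_dvd k.succ_pos h; rw [Finset.mem_range] at hk; omega)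
    rw [if_neg hndvd, mul_zero]
  · intro h
    exact absurd (Finset.mem_range.2 (Nat.sub_lt hn one_pos)) h

theorem sum_nthRootsFinset_inv_inv_mul_sub (hζ : IsPrimitiveRoot ζ n) {v s : K} (hv : v ≠ 0)
    (hvs : (v * s) ^ n ≠ 1) :
    ∑ α ∈ nthRootsFinset n (1 : K), ((v * α)⁻¹ - s)⁻¹ = n * s ^ (n - 1) / ((v ^ n)⁻¹ - s ^ n) := by
  obtain ⟨m, rfl⟩ : ∃ m, n = m + 1 := Nat.exists_eq_add_one.2 <| Nat.pos_of_ne_zero <| by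
    rintro rfl; exact hvs (pow_zero _)
  have term : ∀ α ∈ nthRootsFinset (m + 1) (1 : K),
      ((v * α)⁻¹ - s)⁻¹ = v * (α / (1 - v * s * α)) := by
    intro α hα
    have hα : α ≠ 0 := ne_zero_of_mem_nthRootsFinset one_ne_zero hα
    rw [show (v * α)⁻¹ - s = (1 - v * s * α) / (v * α) by field_simp, inv_div, mul_div_assoc]
  rw [Finset.sum_congr rfl term, ← Finset.mul_sum, hζ.sum_nthRootsFinset_div_one_sub_mul hvs]
  have h1 : 1 - (v * s) ^ (m + 1) ≠ 0 := sub_ne_zero.2 (Ne.symm hvs)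
  rw [mul_pow] at h1
  rw [Nat.add_sub_cancel]
  field_simp
  ring

end IsPrimitiveRoot

theorem pow_ne_one_of_norm_lt_one {𝕜 : Type*} [NormedDivisionRing 𝕜] {x : 𝕜} (hx : ‖x‖ < 1)
    {n : ℕ} (hn : n ≠ 0) : x ^ n ≠ 1 := fun h ↦ by
  have := pow_lt_one₀ (norm_nonneg x) hx hn
  rw [← norm_pow, h, norm_one] at this
  exact lt_irrefl _ this

theorem Complex.norm_log_one_sub_le {ζ : ℂ} (h : ‖ζ‖ < 1) :
    ‖log (1 - ζ)‖ ≤ 5 - Real.log (1 - ‖ζ‖) := by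
  have hlow : 1 - ‖ζ‖ ≤ ‖1 - ζ‖ := by simpa using norm_sub_norm_le (1 : ℂ) ζ
  have hhigh : ‖1 - ζ‖ ≤ 2 := (norm_sub_le _ _).trans (by rw [norm_one]; linarith)
  have hpos : 0 < ‖1 - ζ‖ := (sub_pos.2 h).trans_le hlow
  have hre : |Real.log ‖1 - ζ‖| ≤ 1 - Real.log (1 - ‖ζ‖) := by
    rw [abs_le]
    constructor
    · linarith [Real.log_le_log (sub_pos.2 h) hlow]
    · linarith [Real.log_le_log hpos hhigh, Real.log_two_lt_d9,
        Real.log_nonpos (sub_pos.2 h).le (sub_le_self 1 (norm_nonneg ζ))]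
  calc ‖log (1 - ζ)‖ ≤ |(log (1 - ζ)).re| + |(log (1 - ζ)).im| := norm_le_abs_re_add_abs_im _
    _ ≤ (1 - Real.log (1 - ‖ζ‖)) + 4 := by
      rw [log_re, log_im]
      gcongr
      exact (abs_arg_le_pi _).trans Real.pi_lt_four.le
    _ = 5 - Real.log (1 - ‖ζ‖) := by ring

theorem Real.min_mul_one_sub_le_one_sub_rpow {r t : ℝ} (hr : 0 < r) (ht : 0 < t) (ht1 : t ≤ 1) :
    min r 1 * (1 - t) ≤ 1 - t ^ r := by
  rcases le_total r 1 with h | h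
  · have := rpow_one_add_le_one_add_mul_self (s := t - 1) (by linarith) hr.le h
    rw [min_eq_left h]
    simp only [add_sub_cancel] at this
    linarith
  · have := Real.rpow_le_rpow_of_exponent_ge ht ht1 h
    rw [Real.rpow_one] at this
    rw [min_eq_right h]
    linarith

theorem Real.neg_log_le_rpow_neg_inv_four {x : ℝ} (hx : 0 < x) :
    -Real.log x ≤ 4 * x ^ (-(4⁻¹) : ℝ) := by
  have := Real.log_le_rpow_div (x := x⁻¹) (ε := 4⁻¹) (by positivity) (by norm_num)
  rwa [Real.log_inv, Real.inv_rpow hx.le, ← Real.rpow_neg hx.le, div_inv_eq_mul, mul_comm] at this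

theorem integrableOn_one_sub_rpow_neg_inv_two :
    IntegrableOn (fun t : ℝ ↦ (1 - t) ^ (-(2⁻¹) : ℝ)) (Ioo 0 1) := by
  have h := ((intervalIntegral.intervalIntegrable_rpow' (a := 0) (b := 1)
    (r := -(2⁻¹)) (by norm_num)).comp_sub_left 1).symm
  rw [sub_zero, sub_self] at h
  exact (intervalIntegrable_iff_integrableOn_Ioo_of_le zero_le_one).1 h

theorem image_pow_Ioo_zero_one {n : ℕ} (hn : n ≠ 0) :
    (fun s : ℝ ↦ s ^ n) '' Ioo 0 1 = Ioo 0 1 := by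
  ext x
  constructor
  · rintro ⟨s, ⟨hs0, hs1⟩, rfl⟩
    exact ⟨pow_pos hs0 n, pow_lt_one₀ hs0.le hs1 hn⟩
  · rintro ⟨hx0, hx1⟩
    exact ⟨x ^ (n⁻¹ : ℝ), ⟨by positivity, Real.rpow_lt_one hx0.le hx1 (by positivity)⟩,
      Real.rpow_inv_natCast_pow hx0.le hn⟩

theorem integral_Ioo_zero_one_eq_integral_comp_pow {E : Type*} [NormedAddCommGroup E]
    [NormedSpace ℝ E] {n : ℕ} (hn : n ≠ 0) (f : ℝ → E) :
    ∫ t in Ioo (0 : ℝ) 1, f t = ∫ s in Ioo (0 : ℝ) 1, ((n : ℝ) * s ^ (n - 1)) • f (s ^ n) := by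
  have h := integral_image_eq_integral_abs_deriv_smul (measurableSet_Ioo (a := (0 : ℝ)) (b := 1))
    (fun s _ ↦ (hasDerivAt_pow n s).hasDerivWithinAt)
    ((pow_left_strictMonoOn₀ hn).injOn.mono fun _ hs ↦ le_of_lt (mem_Ioo.1 hs).1) f
  rw [image_pow_Ioo_zero_one hn] at h
  rw [h]
  refine setIntegral_congr_fun measurableSet_Ioo fun s hs ↦ ?_
  rw [abs_of_nonneg (by have := hs.1; positivity)]

theorem norm_tpow (z : ℂ) {t : ℝ} (ht : 0 < t) : ‖tpow z t‖ = t ^ z.re := by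
  rw [tpow, norm_exp, Real.rpow_def_of_pos ht, mul_comm]
  simp

theorem norm_mul_tpow_le {a : ℂ} (ha : ‖a‖ ≤ 1) (z : ℂ) {t : ℝ} (ht : 0 < t) :
    ‖a * tpow z t‖ ≤ t ^ z.re := by
  rw [norm_mul, norm_tpow z ht]
  exact mul_le_of_le_one_left (Real.rpow_nonneg ht.le _) ha

theorem tpow_div_natCast_pow (z : ℂ) {n : ℕ} (hn : n ≠ 0) (s : ℝ) :
    tpow (z / n) (s ^ n) = tpow z s := by
  rw [tpow, tpow, Real.log_pow]
  push_cast
  field_simp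

theorem continuousOn_tpow (z : ℂ) : ContinuousOn (tpow z) (Ioi 0) :=
  continuous_exp.comp_continuousOn <| continuousOn_const.mul <|
    continuous_ofReal.comp_continuousOn <| Real.continuousOn_log.mono fun _ ht ↦ ne_of_gt ht

theorem continuousOn_log_one_sub_mul_tpow {z a : ℂ} (hz : 0 < z.re) (ha : ‖a‖ ≤ 1) :
    ContinuousOn (fun t : ℝ ↦ log (1 - a * tpow z t)) (Ioo 0 1) := by
  refine (continuousOn_const.sub <| continuousOn_const.mul <|
    (continuousOn_tpow z).mono Ioo_subset_Ioi_self).clog fun t ht ↦ ?_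
  have h : ‖-(a * tpow z t)‖ < 1 := by
    rw [norm_neg]
    exact (norm_mul_tpow_le ha z ht.1).trans_lt (Real.rpow_lt_one ht.1.le ht.2 hz)
  simpa [sub_eq_add_neg] using mem_slitPlane_of_norm_lt_one h

theorem exists_norm_log_one_sub_mul_tpow_le {z : ℂ} (hz : 0 < z.re) :
    ∃ C, ∀ a : ℂ, ‖a‖ ≤ 1 → ∀ t ∈ Ioo (0 : ℝ) 1,
      ‖log (1 - a * tpow z t)‖ ≤ C * (1 - t) ^ (-(4⁻¹) : ℝ) := by
  set c := min z.re 1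
  refine ⟨9 - Real.log c, fun a ha t ht ↦ ?_⟩
  have hc : 0 < c := lt_min hz one_pos
  have hlogc : Real.log c ≤ 0 := Real.log_nonpos hc.le (min_le_right _ _)
  have h1t : 0 < 1 - t := sub_pos.2 ht.2
  have hone : 1 ≤ (1 - t) ^ (-(4⁻¹) : ℝ) :=
    Real.one_le_rpow_of_pos_of_le_one_of_nonpos h1t (by linarith [ht.1]) (by norm_num)
  have hnorm := norm_mul_tpow_le ha z ht.1
  have htr : c * (1 - t) ≤ 1 - t ^ z.re := Real.min_mul_one_sub_le_one_sub_rpow hz ht.1 ht.2.le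
  calc ‖log (1 - a * tpow z t)‖ ≤ 5 - Real.log (1 - ‖a * tpow z t‖) :=
        norm_log_one_sub_le (hnorm.trans_lt (Real.rpow_lt_one ht.1.le ht.2 hz))
    _ ≤ 5 - Real.log (c * (1 - t)) := by
        gcongr
        linarith
    _ = 5 - Real.log c - Real.log (1 - t) := by rw [Real.log_mul hc.ne' h1t.ne']; ring
    _ ≤ (9 - Real.log c) * (1 - t) ^ (-(4⁻¹) : ℝ) := by
        nlinarith [Real.neg_log_le_rpow_neg_inv_four h1t]

noncomputable def F3Numerator (z u w : ℂ) (t : ℝ) : ℂ :=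
  log (1 - u * tpow z t) * log (1 - w * tpow z t)

theorem F3_eq_setIntegral_Ioo (z u v w : ℂ) :
    F3 z u v w = ∫ t in Ioo (0 : ℝ) 1, F3Numerator z u w t / (v⁻¹ - t) := by
  rw [F3, intervalIntegral.integral_of_le zero_le_one, integral_Ioc_eq_integral_Ioo]
  rfl

theorem integrableOn_F3Numerator {z u w : ℂ} (hz : 0 < z.re) (hu : ‖u‖ ≤ 1) (hw : ‖w‖ ≤ 1) :
    IntegrableOn (F3Numerator z u w) (Icc 0 1) := by
  rw [integrableOn_Icc_iff_integrableOn_Ioo]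
  obtain ⟨C, hC⟩ := exists_norm_log_one_sub_mul_tpow_le hz
  refine Integrable.mono' (integrableOn_one_sub_rpow_neg_inv_two.const_mul (C ^ 2))
    (((continuousOn_log_one_sub_mul_tpow hz hu).mul
      (continuousOn_log_one_sub_mul_tpow hz hw)).aestronglyMeasurable measurableSet_Ioo)
    (ae_restrict_of_forall_mem measurableSet_Ioo fun t ht ↦ ?_)
  have h1t : 0 ≤ 1 - t := sub_nonneg.2 ht.2.le
  calc ‖F3Numerator z u w t‖
      = ‖log (1 - u * tpow z t)‖ * ‖log (1 - w * tpow z t)‖ := norm_mul _ _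
    _ ≤ (C * (1 - t) ^ (-(4⁻¹) : ℝ)) * (C * (1 - t) ^ (-(4⁻¹) : ℝ)) :=
        mul_le_mul (hC u hu t ht) (hC w hw t ht) (norm_nonneg _)
          ((norm_nonneg _).trans (hC u hu t ht))
    _ = C ^ 2 * (1 - t) ^ (-(2⁻¹) : ℝ) := by
        rw [mul_mul_mul_comm, ← Real.rpow_add' h1t (by norm_num)]
        norm_num [sq]

theorem integrableOn_F3_integrand {z u v w : ℂ} (hz : 0 < z.re) (hu : ‖u‖ ≤ 1) (hw : ‖w‖ ≤ 1)
    (hv0 : v ≠ 0) (hv1 : ‖v‖ ≤ 1) (hv : v ≠ 1) :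
    IntegrableOn (fun t : ℝ ↦ F3Numerator z u w t / (v⁻¹ - t)) (Ioo 0 1) := by
  have hne : ∀ t ∈ Icc (0 : ℝ) 1, v⁻¹ - t ≠ 0 := by
    rintro t ⟨ht0, ht1⟩ h
    rw [sub_eq_zero] at h
    have hone : 1 ≤ t := by
      rw [← Real.norm_of_nonneg ht0, ← norm_real, ← h, norm_inv]
      exact one_le_inv₀ (norm_pos_iff.2 hv0) |>.2 hv1
    exact hv (by rw [← inv_inv v, h, le_antisymm ht1 hone, ofReal_one, inv_one])
  have hinv : ContinuousOn (fun t : ℝ ↦ (v⁻¹ - t)⁻¹) (Icc 0 1) :=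
    (continuousOn_const.sub continuous_ofReal.continuousOn).inv₀ hne
  simpa only [div_eq_mul_inv] using
    ((integrableOn_F3Numerator hz hu hw).mul_continuousOn hinv isCompact_Icc).mono_set
      Ioo_subset_Icc_self

theorem smul_F3_integrand_comp_pow {n : ℕ} (hn : n ≠ 0) (z u w : ℂ) {v : ℂ} (hv : v ≠ 0)
    {s : ℝ} (hvs : (v * s) ^ n ≠ 1) :
    ((n : ℝ) * s ^ (n - 1)) • (F3Numerator (z / n) u w (s ^ n) / ((v ^ n)⁻¹ - ↑(s ^ n))) =
      ∑ α ∈ nthRootsFinset n (1 : ℂ), F3Numerator z u w s / ((v * α)⁻¹ - s) := by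
  simp_rw [div_eq_mul_inv (F3Numerator z u w s), ← Finset.mul_sum,
    (isPrimitiveRoot_exp n hn).sum_nthRootsFinset_inv_inv_mul_sub hv hvs, F3Numerator,
    tpow_div_natCast_pow z hn, Complex.real_smul]
  push_cast
  ring

theorem statement5_general (n : ℕ) (hn : 1 ≤ n) (z u v w : ℂ) (hz : 0 < z.re)
    (hu1 : ‖u‖ ≤ 1)
    (hw1 : ‖w‖ ≤ 1)
    (hvn0 : v ^ n ≠ 0) (hvn1 : ‖v ^ n‖ ≤ 1) (hvn2 : v ^ n ≠ 1) :
    F3 (z / (n : ℂ)) u (v ^ n) w =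
      ∑ α ∈ nthRootsFinset n (1 : ℂ), F3 z u (v * α) w := by
  have hn0 : n ≠ 0 := Nat.one_le_iff_ne_zero.1 hn
  have hv0 : v ≠ 0 := by rintro rfl; exact hvn0 (zero_pow hn0)
  have hv1 : ‖v‖ ≤ 1 := (pow_le_one_iff_of_nonneg (norm_nonneg v) hn0).1 (norm_pow v n ▸ hvn1)
  have hvα : ∀ α ∈ nthRootsFinset n (1 : ℂ), v * α ≠ 0 ∧ ‖v * α‖ ≤ 1 ∧ v * α ≠ 1 := by
    intro α hα
    have hαn : α ^ n = 1 := (mem_nthRootsFinset (Nat.pos_of_ne_zero hn0) 1).1 hα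
    refine ⟨mul_ne_zero hv0 (ne_zero_of_mem_nthRootsFinset one_ne_zero hα), ?_, fun h ↦ ?_⟩
    · rwa [norm_mul, norm_eq_one_of_pow_eq_one hαn hn0, mul_one]
    · exact hvn2 (by simpa [mul_pow, hαn] using congrArg (· ^ n) h)
  calc F3 (z / n) u (v ^ n) w
      = ∫ s in Ioo (0 : ℝ) 1,
          ∑ α ∈ nthRootsFinset n (1 : ℂ), F3Numerator z u w s / ((v * α)⁻¹ - s) := by
        rw [F3_eq_setIntegral_Ioo, integral_Ioo_zero_one_eq_integral_comp_pow hn0]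
        refine setIntegral_congr_fun measurableSet_Ioo fun s hs ↦
          smul_F3_integrand_comp_pow hn0 z u w hv0 (pow_ne_one_of_norm_lt_one ?_ hn0)
        rw [norm_mul, norm_real, Real.norm_of_nonneg hs.1.le]
        exact mul_lt_one_of_nonneg_of_lt_one_right hv1 hs.1.le hs.2
    _ = ∑ α ∈ nthRootsFinset n (1 : ℂ), F3 z u (v * α) w := by
        simp_rw [F3_eq_setIntegral_Ioo]
        exact integral_finsetSum _ fun α hα ↦
          integrableOn_F3_integrand hz hu1 hw1 (hvα α hα).1 (hvα α hα).2.1 (hvα α hα).2.2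

theorem statement5 (n : ℕ) (hn : 1 ≤ n) (z u v w : ℂ) (hz : 0 < z.re)
    (hu0 : u ≠ 0) (hu1 : ‖u‖ ≤ 1)
    (hw0 : w ≠ 0) (hw1 : ‖w‖ ≤ 1)
    (hvn0 : v ^ n ≠ 0) (hvn1 : ‖v ^ n‖ ≤ 1) (hvn2 : v ^ n ≠ 1) :
    F3 (z / (n : ℂ)) u (v ^ n) w =
      ∑ α ∈ nthRootsFinset n (1 : ℂ), F3 z u (v * α) w :=
  statement5_general n hn z u v w hz hu1 hw1 hvn0 hvn1 hvn2
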